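/- Suppose (W, W') ∈ ℝ^k × ℝ^k is an exchangeable pair satisfying E(W'|W) = (I_k − Λ)W for an invertible matrix Λ, ‖W − W'‖₂ ≤ K, and E(e^{θᵗW}) < ∞ for all θ. Then for every w ∈ ℝ^k with all coordinates nonnegative, P(W ⪰ w) ≤ exp(−‖w‖₂² / (2K²ν₁)) and P(W ⪯ −w) ≤ exp(−‖w‖₂² / (2K²ν₁)), where ν₁ = 1/σ₁(Λ) and ⪰ denotes coordinatewise ≥. -/

import Mathlib

/-!
Fix a direction `v` and write `v ⬝ W = u ⬝ ΛW` with `Λᵀ u = v`. The regression condition gives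
`E(W - W' | W) = ΛW`, and exchangeability antisymmetrizes, so for `t ≥ 0`
`E[(v ⬝ W) e^{t v ⬝ W}] = ½ E[(u ⬝ (W - W')) (e^{t v ⬝ W} - e^{t v ⬝ W'})]`
`≤ ‖u‖ ‖v‖ K² t E[e^{t v ⬝ W}]` by `|e^a - e^b| ≤ |a - b| (e^a + e^b)`. Integrating this
differential inequality for the moment generating function shows that `v ⬝ W` is sub-Gaussian with variance proxy
`‖u‖ ‖v‖ K² ≤ ‖v‖² K² / σ₁(Λ)`, and the Chernoff bound at level `‖w‖²` for `v = ±w` gives both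
tails: `W ⪰ w` forces `w ⬝ W ≥ ‖w‖²` and `W ⪯ -w` forces `(-w) ⬝ W ≥ ‖w‖²`.
-/

open MeasureTheory ProbabilityTheory Real Matrix

/-- The Euclidean (ℓ²) norm on `Fin k → ℝ`. -/
noncomputable def norm2 {k : ℕ} (x : Fin k → ℝ) : ℝ := Real.sqrt (∑ i, x i ^ 2)

/-- The smallest singular value of a square real matrix: the infimum of `‖Λx‖₂`
over unit vectors `x`. -/
noncomputable def smallestSingularValue {k : ℕ} (Λ : Matrix (Fin k) (Fin k) ℝ) : ℝ :=
  sInf {r | ∃ x : Fin k → ℝ, norm2 x = 1 ∧ r = norm2 (Λ.mulVec x)}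

open scoped NNReal

section Norm2

variable {k : ℕ}

lemma norm2_eq_norm (x : Fin k → ℝ) : norm2 x = ‖WithLp.toLp 2 x‖ := by
  simp [norm2, EuclideanSpace.norm_eq]

lemma norm2_nonneg (x : Fin k → ℝ) : 0 ≤ norm2 x := Real.sqrt_nonneg _

lemma norm2_neg (x : Fin k → ℝ) : norm2 (-x) = norm2 x := by
  simp [norm2]

lemma norm2_smul (c : ℝ) (x : Fin k → ℝ) : norm2 (c • x) = |c| * norm2 x := by
  simp [norm2_eq_norm, WithLp.toLp_smul, norm_smul]

lemma norm2_eq_zero {x : Fin k → ℝ} : norm2 x = 0 ↔ x = 0 := by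
  simp [norm2_eq_norm]

lemma norm2_sq (x : Fin k → ℝ) : norm2 x ^ 2 = x ⬝ᵥ x := by
  rw [norm2, Real.sq_sqrt (Finset.sum_nonneg fun i _ => sq_nonneg _)]
  simp [dotProduct, sq]

lemma abs_dotProduct_le_norm2_mul (x y : Fin k → ℝ) : |x ⬝ᵥ y| ≤ norm2 x * norm2 y := by
  simpa [norm2_eq_norm, EuclideanSpace.inner_toLp_toLp, dotProduct_comm] using
    abs_real_inner_le_norm (WithLp.toLp 2 x) (WithLp.toLp 2 y)

end Norm2

section SmallestSingularValue

variable {k : ℕ} (Λ : Matrix (Fin k) (Fin k) ℝ)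

lemma smallestSingularValue_nonneg : 0 ≤ smallestSingularValue Λ :=
  Real.sInf_nonneg fun _ ⟨_, _, hr⟩ => hr ▸ norm2_nonneg _

lemma smallestSingularValue_mul_norm2_le (x : Fin k → ℝ) :
    smallestSingularValue Λ * norm2 x ≤ norm2 (Λ *ᵥ x) := by
  rcases eq_or_ne x 0 with rfl | hx
  · simp [norm2]
  have hx' : 0 < norm2 x := (norm2_nonneg x).lt_of_ne' (norm2_eq_zero.not.mpr hx)
  have hunit : norm2 ((norm2 x)⁻¹ • x) = 1 := by
    rw [norm2_smul, abs_of_pos (inv_pos.mpr hx'), inv_mul_cancel₀ hx'.ne']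
  have hle : smallestSingularValue Λ ≤ norm2 (Λ *ᵥ ((norm2 x)⁻¹ • x)) :=
    csInf_le ⟨0, fun _ ⟨_, _, hr⟩ => hr ▸ norm2_nonneg _⟩ ⟨_, hunit, rfl⟩
  rw [mulVec_smul, norm2_smul, abs_of_pos (inv_pos.mpr hx'), inv_mul_eq_div,
    le_div_iff₀ hx'] at hle
  exact hle

lemma smallestSingularValue_mul_norm2_le_transpose (hΛ : IsUnit Λ.det) (z : Fin k → ℝ) :
    smallestSingularValue Λ * norm2 z ≤ norm2 (Λᵀ *ᵥ z) := by
  rcases (norm2_nonneg z).eq_or_lt with hz | hz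
  · rw [← hz, mul_zero]
    exact norm2_nonneg _
  have hinv : Λ *ᵥ (Λ⁻¹ *ᵥ z) = z := by rw [mulVec_mulVec, mul_nonsing_inv Λ hΛ, one_mulVec]
  have hσ := smallestSingularValue_mul_norm2_le Λ (Λ⁻¹ *ᵥ z)
  rw [hinv] at hσ
  refine le_of_mul_le_mul_right ?_ hz
  calc smallestSingularValue Λ * norm2 z * norm2 z
      = smallestSingularValue Λ * (Λᵀ *ᵥ z ⬝ᵥ Λ⁻¹ *ᵥ z) := by
        rw [mul_assoc, ← sq, norm2_sq, mulVec_transpose, ← dotProduct_mulVec, hinv]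
    _ ≤ smallestSingularValue Λ * (norm2 (Λᵀ *ᵥ z) * norm2 (Λ⁻¹ *ᵥ z)) :=
        mul_le_mul_of_nonneg_left ((le_abs_self _).trans (abs_dotProduct_le_norm2_mul _ _))
          (smallestSingularValue_nonneg Λ)
    _ ≤ norm2 (Λᵀ *ᵥ z) * norm2 z := by
        rw [mul_left_comm]
        exact mul_le_mul_of_nonneg_left hσ (norm2_nonneg _)

end SmallestSingularValue

lemma abs_exp_sub_exp_le (a b : ℝ) : |exp a - exp b| ≤ |a - b| * (exp a + exp b) := by
  wlog hab : b ≤ a generalizing a b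
  · rw [abs_sub_comm, abs_sub_comm a, add_comm]
    exact this b a (le_of_not_ge hab)
  have hexp : exp a * (b - a + 1) ≤ exp b := by
    simpa [← exp_add] using mul_le_mul_of_nonneg_left (add_one_le_exp (b - a)) (exp_pos a).le
  rw [abs_of_nonneg (sub_nonneg.mpr (exp_le_exp.mpr hab)), abs_of_nonneg (sub_nonneg.mpr hab)]
  nlinarith [exp_pos b]

lemma dotProduct_sub_mul_exp_sub_le {k : ℕ} {K t : ℝ} (ht : 0 ≤ t) (u v : Fin k → ℝ)
    {x y : Fin k → ℝ} (hxy : norm2 (x - y) ≤ K) :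
    (u ⬝ᵥ (x - y)) * (exp (t * v ⬝ᵥ x) - exp (t * v ⬝ᵥ y))
      ≤ norm2 u * norm2 v * K ^ 2 * t * (exp (t * v ⬝ᵥ x) + exp (t * v ⬝ᵥ y)) := by
  have hu : |u ⬝ᵥ (x - y)| ≤ norm2 u * K :=
    (abs_dotProduct_le_norm2_mul u _).trans (mul_le_mul_of_nonneg_left hxy (norm2_nonneg u))
  have hv : |t * v ⬝ᵥ x - t * v ⬝ᵥ y| ≤ t * (norm2 v * K) := by
    rw [← mul_sub, ← dotProduct_sub, abs_mul, abs_of_nonneg ht]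
    exact mul_le_mul_of_nonneg_left
      ((abs_dotProduct_le_norm2_mul v _).trans (mul_le_mul_of_nonneg_left hxy (norm2_nonneg v))) ht
  have huK : 0 ≤ norm2 u * K := (abs_nonneg _).trans hu
  calc (u ⬝ᵥ (x - y)) * (exp (t * v ⬝ᵥ x) - exp (t * v ⬝ᵥ y))
      ≤ |u ⬝ᵥ (x - y)| * |exp (t * v ⬝ᵥ x) - exp (t * v ⬝ᵥ y)| :=
        (le_abs_self _).trans (abs_mul _ _).le
    _ ≤ (norm2 u * K) * (t * (norm2 v * K) * (exp (t * v ⬝ᵥ x) + exp (t * v ⬝ᵥ y))) := by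
        gcongr
        exact (abs_exp_sub_exp_le _ _).trans (by gcongr)
    _ = norm2 u * norm2 v * K ^ 2 * t * (exp (t * v ⬝ᵥ x) + exp (t * v ⬝ᵥ y)) := by ring

lemma le_mul_exp_of_hasDerivAt_le {f f' : ℝ → ℝ} {c : ℝ}
    (hf : ∀ t, 0 ≤ t → HasDerivAt f (f' t) t) (hf' : ∀ t, 0 ≤ t → f' t ≤ c * t * f t)
    {t : ℝ} (ht : 0 ≤ t) : f t ≤ f 0 * exp (c * t ^ 2 / 2) := by
  set ψ : ℝ → ℝ := fun s => f s * exp (-(c * s ^ 2 / 2))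
  have hψ : ∀ s, 0 ≤ s → HasDerivAt ψ (exp (-(c * s ^ 2 / 2)) * (f' s - c * s * f s)) s := by
    intro s hs
    have hg : HasDerivAt (fun s : ℝ => -(c * s ^ 2 / 2)) (-(c * s)) s :=
      (((hasDerivAt_pow 2 s).const_mul c).div_const 2).neg.congr_deriv (by simp; ring)
    exact ((hf s hs).mul hg.exp).congr_deriv (by ring)
  have hanti : AntitoneOn ψ (Set.Ici 0) := by
    refine antitoneOn_of_deriv_nonpos (convex_Ici 0)
      (fun s hs => (hψ s hs).continuousAt.continuousWithinAt) ?_ ?_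
    · rw [interior_Ici]
      exact fun s hs => (hψ s (le_of_lt hs)).differentiableAt.differentiableWithinAt
    · rw [interior_Ici]
      intro s hs
      rw [(hψ s (le_of_lt hs)).deriv]
      exact mul_nonpos_of_nonneg_of_nonpos (exp_pos _).le
        (sub_nonpos.mpr (hf' s (le_of_lt hs)))
  have h : f t * exp (-(c * t ^ 2 / 2)) ≤ f 0 := by
    simpa [ψ] using hanti Set.self_mem_Ici ht ht
  calc f t = f t * exp (-(c * t ^ 2 / 2)) * exp (c * t ^ 2 / 2) := by
        rw [mul_assoc, ← exp_add, neg_add_cancel, exp_zero, mul_one]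
    _ ≤ f 0 * exp (c * t ^ 2 / 2) := mul_le_mul_of_nonneg_right h (exp_pos _).le

namespace ProbabilityTheory.IdentDistrib

variable {Ω α : Type*} [MeasurableSpace Ω] [MeasurableSpace α] {μ : Measure Ω} {X Y : Ω → α}

lemma integral_eq_half_integral_add_swap
    (h : IdentDistrib (fun ω => (X ω, Y ω)) (fun ω => (Y ω, X ω)) μ μ) {φ : α × α → ℝ}
    (hφ : Measurable φ) (hint : Integrable (fun ω => φ (X ω, Y ω)) μ) :
    ∫ ω, φ (X ω, Y ω) ∂μ = (∫ ω, (φ (X ω, Y ω) + φ (Y ω, X ω)) ∂μ) / 2 := by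
  have hswap := h.comp hφ
  have hint' : Integrable (fun ω => φ (Y ω, X ω)) μ := hswap.integrable_iff.mp hint
  rw [integral_add hint hint',
    ← show ∫ ω, φ (X ω, Y ω) ∂μ = ∫ ω, φ (Y ω, X ω) ∂μ from hswap.integral_eq]
  ring

end ProbabilityTheory.IdentDistrib

section ExchangeablePair

variable {Ω : Type*} [MeasurableSpace Ω] {μ : Measure Ω} {k : ℕ} {W W' : Ω → Fin k → ℝ}

lemma integrable_exp_mul_dotProduct
    (hmgf : ∀ θ : Fin k → ℝ, Integrable (fun ω => exp (θ ⬝ᵥ W ω)) μ) (v : Fin k → ℝ) (t : ℝ) :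
    Integrable (fun ω => exp (t * v ⬝ᵥ W ω)) μ := by
  simpa [smul_dotProduct] using hmgf (t • v)

lemma integrableExpSet_dotProduct_eq_univ
    (hmgf : ∀ θ : Fin k → ℝ, Integrable (fun ω => exp (θ ⬝ᵥ W ω)) μ) (v : Fin k → ℝ) :
    integrableExpSet (fun ω => v ⬝ᵥ W ω) μ = Set.univ :=
  Set.eq_univ_of_forall (integrable_exp_mul_dotProduct hmgf v)

lemma integrable_apply_of_integrable_exp_dotProduct
    (hmgf : ∀ θ : Fin k → ℝ, Integrable (fun ω => exp (θ ⬝ᵥ W ω)) μ) (i : Fin k) :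
    Integrable (fun ω => W ω i) μ := by
  have h := integrable_of_mem_interior_integrableExpSet (μ := μ)
    (X := fun ω => Pi.single i 1 ⬝ᵥ W ω) (by rw [integrableExpSet_dotProduct_eq_univ hmgf]; simp)
  simpa using h

lemma condExp_sub_ae_eq_mulVec_apply [IsFiniteMeasure μ] (hW : Measurable W)
    (hint : ∀ i, Integrable (fun ω => W ω i) μ) (hint' : ∀ i, Integrable (fun ω => W' ω i) μ)
    (Λ : Matrix (Fin k) (Fin k) ℝ)
    (hcond : ∀ i, μ[fun ω => W' ω i | MeasurableSpace.comap W inferInstance]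
      =ᵐ[μ] fun ω => ∑ j, (1 - Λ) i j * W ω j) (i : Fin k) :
    μ[fun ω => W ω i - W' ω i | MeasurableSpace.comap W inferInstance]
      =ᵐ[μ] fun ω => (Λ *ᵥ W ω) i := by
  have hWi : μ[fun ω => W ω i | MeasurableSpace.comap W inferInstance] = fun ω => W ω i :=
    condExp_of_stronglyMeasurable hW.comap_le
      ((measurable_pi_apply i).comp (comap_measurable W)).stronglyMeasurable (hint i)
  filter_upwards [condExp_sub (hint i) (hint' i) (MeasurableSpace.comap W inferInstance),
    hcond i] with ω hsub hW'i
  rw [show (fun ω => W ω i - W' ω i) = (fun ω => W ω i) - fun ω => W' ω i from rfl, hsub,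
    Pi.sub_apply, hWi, hW'i, show ∑ j, (1 - Λ) i j * W ω j = ((1 - Λ) *ᵥ W ω) i from rfl,
    sub_mulVec, one_mulVec, Pi.sub_apply, sub_sub_cancel]

lemma condExp_dotProduct_sub_ae_eq [IsFiniteMeasure μ] (hW : Measurable W)
    (hint : ∀ i, Integrable (fun ω => W ω i) μ) (hint' : ∀ i, Integrable (fun ω => W' ω i) μ)
    (Λ : Matrix (Fin k) (Fin k) ℝ)
    (hcond : ∀ i, μ[fun ω => W' ω i | MeasurableSpace.comap W inferInstance]
      =ᵐ[μ] fun ω => ∑ j, (1 - Λ) i j * W ω j) (u : Fin k → ℝ) :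
    μ[fun ω => u ⬝ᵥ (W ω - W' ω) | MeasurableSpace.comap W inferInstance]
      =ᵐ[μ] fun ω => u ⬝ᵥ Λ *ᵥ W ω := by
  have hsum : (fun ω => u ⬝ᵥ (W ω - W' ω)) = ∑ i, u i • fun ω => W ω i - W' ω i := by
    ext ω
    simp [dotProduct]
  rw [hsum]
  filter_upwards [condExp_finsetSum (s := Finset.univ) (f := fun i => u i • fun ω => W ω i - W' ω i)
      (fun i _ => ((hint i).sub (hint' i)).smul (u i)) (MeasurableSpace.comap W inferInstance),
    ae_all_iff.mpr fun i => condExp_smul (μ := μ) (u i) (fun ω => W ω i - W' ω i)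
      (MeasurableSpace.comap W inferInstance),
    ae_all_iff.mpr (condExp_sub_ae_eq_mulVec_apply hW hint hint' Λ hcond)] with ω hsum hsmul hcoord
  rw [hsum, Finset.sum_apply]
  simp only [hsmul, Pi.smul_apply, hcoord, smul_eq_mul, dotProduct]

lemma integral_dotProduct_mulVec_mul_eq [IsFiniteMeasure μ] (hW : Measurable W)
    (hint : ∀ i, Integrable (fun ω => W ω i) μ) (hint' : ∀ i, Integrable (fun ω => W' ω i) μ)
    (Λ : Matrix (Fin k) (Fin k) ℝ)
    (hcond : ∀ i, μ[fun ω => W' ω i | MeasurableSpace.comap W inferInstance]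
      =ᵐ[μ] fun ω => ∑ j, (1 - Λ) i j * W ω j)
    (u : Fin k → ℝ) {g : Ω → ℝ}
    (hgm : StronglyMeasurable[MeasurableSpace.comap W inferInstance] g)
    (hgD : Integrable (fun ω => g ω * u ⬝ᵥ (W ω - W' ω)) μ) :
    ∫ ω, (u ⬝ᵥ Λ *ᵥ W ω) * g ω ∂μ = ∫ ω, (u ⬝ᵥ (W ω - W' ω)) * g ω ∂μ := by
  have hD : Integrable (fun ω => u ⬝ᵥ (W ω - W' ω)) μ := by
    simp only [dotProduct_sub]
    exact (integrable_finsetSum _ fun i _ => (hint i).const_mul (u i)).sub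
      (integrable_finsetSum _ fun i _ => (hint' i).const_mul (u i))
  calc ∫ ω, (u ⬝ᵥ Λ *ᵥ W ω) * g ω ∂μ
      = ∫ ω, g ω * μ[fun ω => u ⬝ᵥ (W ω - W' ω) | MeasurableSpace.comap W inferInstance] ω ∂μ :=
        integral_congr_ae <| (condExp_dotProduct_sub_ae_eq hW hint hint' Λ hcond u).mono
          fun ω hω => by dsimp only; rw [hω, mul_comm]
    _ = ∫ ω, μ[fun ω => g ω * u ⬝ᵥ (W ω - W' ω) | MeasurableSpace.comap W inferInstance] ω ∂μ :=
        integral_congr_ae (condExp_mul_of_stronglyMeasurable_left hgm hgD hD).symm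
    _ = ∫ ω, (u ⬝ᵥ (W ω - W' ω)) * g ω ∂μ := by
        rw [integral_condExp hW.comap_le]
        simp only [mul_comm]

lemma integral_dotProduct_mul_exp_le [IsFiniteMeasure μ] (hW : Measurable W)
    (hW' : Measurable W')
    (hexch : IdentDistrib (fun ω => (W ω, W' ω)) (fun ω => (W' ω, W ω)) μ μ)
    (Λ : Matrix (Fin k) (Fin k) ℝ)
    (hcond : ∀ i, μ[fun ω => W' ω i | MeasurableSpace.comap W inferInstance]
      =ᵐ[μ] fun ω => ∑ j, (1 - Λ) i j * W ω j)
    {K : ℝ} (hK : ∀ᵐ ω ∂μ, norm2 (fun i => W ω i - W' ω i) ≤ K)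
    (hmgf : ∀ θ : Fin k → ℝ, Integrable (fun ω => exp (θ ⬝ᵥ W ω)) μ)
    {u v : Fin k → ℝ} (huv : Λᵀ *ᵥ u = v) {t : ℝ} (ht : 0 ≤ t) :
    ∫ ω, (v ⬝ᵥ W ω) * exp (t * v ⬝ᵥ W ω) ∂μ
      ≤ norm2 u * norm2 v * K ^ 2 * t * ∫ ω, exp (t * v ⬝ᵥ W ω) ∂μ := by
  set c := norm2 u * norm2 v * K ^ 2
  set φ : (Fin k → ℝ) → ℝ := fun x => exp (t * v ⬝ᵥ x)
  have hφ : Measurable φ := by fun_prop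
  have hWW' : IdentDistrib W W' μ μ := hexch.comp measurable_fst
  have hg : Integrable (fun ω => φ (W ω)) μ := integrable_exp_mul_dotProduct hmgf v t
  have hg' : Integrable (fun ω => φ (W' ω)) μ := (hWW'.comp hφ).integrable_iff.mp hg
  have hint i : Integrable (fun ω => W ω i) μ :=
    integrable_apply_of_integrable_exp_dotProduct hmgf i
  have hint' i : Integrable (fun ω => W' ω i) μ :=
    (hWW'.comp (measurable_pi_apply i)).integrable_iff.mp (hint i)
  have hDm : AEStronglyMeasurable (fun ω => u ⬝ᵥ (W ω - W' ω)) μ := by fun_prop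
  have hD : ∀ᵐ ω ∂μ, ‖u ⬝ᵥ (W ω - W' ω)‖ ≤ norm2 u * K := by
    filter_upwards [hK] with ω hω
    exact (abs_dotProduct_le_norm2_mul u _).trans (mul_le_mul_of_nonneg_left hω (norm2_nonneg u))
  have hsymm : Integrable (fun ω => (u ⬝ᵥ (W ω - W' ω)) * (φ (W ω) - φ (W' ω))) μ :=
    (hg.sub hg').bdd_mul hDm hD
  calc ∫ ω, (v ⬝ᵥ W ω) * exp (t * v ⬝ᵥ W ω) ∂μ
      = ∫ ω, (u ⬝ᵥ Λ *ᵥ W ω) * φ (W ω) ∂μ := by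
        simp only [φ, ← huv, mulVec_transpose, dotProduct_mulVec]
    _ = ∫ ω, (u ⬝ᵥ (W ω - W' ω)) * φ (W ω) ∂μ :=
        integral_dotProduct_mulVec_mul_eq hW hint hint' Λ hcond u
          (hφ.comp (comap_measurable W)).stronglyMeasurable
          (by simpa only [mul_comm] using hg.bdd_mul hDm hD)
    _ = (∫ ω, (u ⬝ᵥ (W ω - W' ω)) * (φ (W ω) - φ (W' ω)) ∂μ) / 2 := by
        rw [hexch.integral_eq_half_integral_add_swap
          (φ := fun p => (u ⬝ᵥ (p.1 - p.2)) * φ p.1) (by fun_prop) (hg.bdd_mul hDm hD)]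
        congr 2 with ω
        rw [← neg_sub (W ω), dotProduct_neg]
        ring
    _ ≤ (∫ ω, c * t * (φ (W ω) + φ (W' ω)) ∂μ) / 2 := by
        refine div_le_div_of_nonneg_right
          (integral_mono_ae hsymm ((hg.add hg').const_mul (c * t)) ?_) zero_le_two
        filter_upwards [hK] with ω hω
        exact dotProduct_sub_mul_exp_sub_le ht u v hω
    _ = c * t * ∫ ω, exp (t * v ⬝ᵥ W ω) ∂μ := by
        rw [integral_const_mul, integral_add hg hg',
          show ∫ ω, φ (W' ω) ∂μ = ∫ ω, φ (W ω) ∂μ from (hWW'.comp hφ).integral_eq.symm]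
        ring

lemma mgf_dotProduct_le [IsProbabilityMeasure μ] (hW : Measurable W) (hW' : Measurable W')
    (hexch : IdentDistrib (fun ω => (W ω, W' ω)) (fun ω => (W' ω, W ω)) μ μ)
    (Λ : Matrix (Fin k) (Fin k) ℝ)
    (hcond : ∀ i, μ[fun ω => W' ω i | MeasurableSpace.comap W inferInstance]
      =ᵐ[μ] fun ω => ∑ j, (1 - Λ) i j * W ω j)
    {K : ℝ} (hK : ∀ᵐ ω ∂μ, norm2 (fun i => W ω i - W' ω i) ≤ K)
    (hmgf : ∀ θ : Fin k → ℝ, Integrable (fun ω => exp (θ ⬝ᵥ W ω)) μ)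
    {u v : Fin k → ℝ} (huv : Λᵀ *ᵥ u = v) {t : ℝ} (ht : 0 ≤ t) :
    mgf (fun ω => v ⬝ᵥ W ω) μ t ≤ exp (norm2 u * norm2 v * K ^ 2 * t ^ 2 / 2) := by
  have h := le_mul_exp_of_hasDerivAt_le (f := mgf (fun ω => v ⬝ᵥ W ω) μ)
    (fun s _ => hasDerivAt_mgf (by simp [integrableExpSet_dotProduct_eq_univ hmgf]))
    (fun s hs => integral_dotProduct_mul_exp_le hW hW' hexch Λ hcond hK hmgf huv hs) ht
  rwa [mgf_zero, one_mul] at h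

lemma hasSubgaussianMGF_dotProduct [IsProbabilityMeasure μ] (hW : Measurable W)
    (hW' : Measurable W')
    (hexch : IdentDistrib (fun ω => (W ω, W' ω)) (fun ω => (W' ω, W ω)) μ μ)
    (Λ : Matrix (Fin k) (Fin k) ℝ)
    (hcond : ∀ i, μ[fun ω => W' ω i | MeasurableSpace.comap W inferInstance]
      =ᵐ[μ] fun ω => ∑ j, (1 - Λ) i j * W ω j)
    {K : ℝ} (hK : ∀ᵐ ω ∂μ, norm2 (fun i => W ω i - W' ω i) ≤ K)
    (hmgf : ∀ θ : Fin k → ℝ, Integrable (fun ω => exp (θ ⬝ᵥ W ω)) μ)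
    {u v : Fin k → ℝ} (huv : Λᵀ *ᵥ u = v) {c : ℝ≥0} (hc : norm2 u * norm2 v * K ^ 2 ≤ c) :
    HasSubgaussianMGF (fun ω => v ⬝ᵥ W ω) c μ where
  integrable_exp_mul := integrable_exp_mul_dotProduct hmgf v
  mgf_le t := by
    rcases le_total 0 t with ht | ht
    · exact (mgf_dotProduct_le hW hW' hexch Λ hcond hK hmgf huv ht).trans (by gcongr)
    · have h := mgf_dotProduct_le hW hW' hexch Λ hcond hK hmgf (u := -u) (v := -v)
        (by rw [mulVec_neg, huv]) (neg_nonneg.mpr ht)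
      rw [norm2_neg, norm2_neg, neg_sq] at h
      calc mgf (fun ω => v ⬝ᵥ W ω) μ t = mgf (fun ω => -v ⬝ᵥ W ω) μ (-t) := by
            simp [mgf, neg_dotProduct]
        _ ≤ _ := h.trans (by gcongr)

lemma measure_sq_norm2_le_dotProduct_le [IsProbabilityMeasure μ] (hW : Measurable W)
    (hW' : Measurable W')
    (hexch : IdentDistrib (fun ω => (W ω, W' ω)) (fun ω => (W' ω, W ω)) μ μ)
    (Λ : Matrix (Fin k) (Fin k) ℝ) (hΛ : IsUnit Λ.det)
    (hcond : ∀ i, μ[fun ω => W' ω i | MeasurableSpace.comap W inferInstance]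
      =ᵐ[μ] fun ω => ∑ j, (1 - Λ) i j * W ω j)
    {K : ℝ} (hK : ∀ᵐ ω ∂μ, norm2 (fun i => W ω i - W' ω i) ≤ K)
    (hmgf : ∀ θ : Fin k → ℝ, Integrable (fun ω => exp (θ ⬝ᵥ W ω)) μ)
    (hσ : 0 < smallestSingularValue Λ) (v : Fin k → ℝ) :
    μ {ω | norm2 v ^ 2 ≤ v ⬝ᵥ W ω}
      ≤ ENNReal.ofReal (exp (-(norm2 v ^ 2 / (2 * K ^ 2 * (1 / smallestSingularValue Λ))))) := by
  set σ := smallestSingularValue Λ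
  set u := (Λᵀ)⁻¹ *ᵥ v
  have huv : Λᵀ *ᵥ u = v := by
    rw [mulVec_mulVec, mul_nonsing_inv _ (by rwa [det_transpose]), one_mulVec]
  have hu : σ * norm2 u ≤ norm2 v := huv ▸ smallestSingularValue_mul_norm2_le_transpose Λ hΛ u
  set c : ℝ≥0 := ⟨norm2 v ^ 2 * (K ^ 2 / σ), by positivity⟩
  have hc_def : (c : ℝ) = norm2 v ^ 2 * (K ^ 2 / σ) := rfl
  have hc : norm2 u * norm2 v * K ^ 2 ≤ c := by
    rw [hc_def, ← mul_div_assoc, le_div_iff₀ hσ]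
    linarith [mul_le_mul_of_nonneg_left hu (mul_nonneg (norm2_nonneg v) (sq_nonneg K))]
  have h := (hasSubgaussianMGF_dotProduct hW hW' hexch Λ hcond hK hmgf huv hc).measure_ge_le
    (sq_nonneg (norm2 v))
  rw [← ofReal_measureReal]
  refine ENNReal.ofReal_le_ofReal (h.trans_eq ?_)
  rw [hc_def, neg_div, one_div, ← div_eq_mul_inv, mul_div_assoc]
  rcases eq_or_ne (norm2 v) 0 with hv | hv
  · simp [hv]
  · rw [sq (norm2 v ^ 2), mul_left_comm, mul_div_mul_left _ _ (pow_ne_zero 2 hv)]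

end ExchangeablePair

/-- Multivariate concentration via exchangeable pairs:
`P(W ⪰ w), P(W ⪯ -w) ≤ exp(-‖w‖₂²/(2K²ν₁))` for coordinatewise nonnegative `w`,
where `ν₁ = 1/σ₁(Λ)`. -/
theorem multivariate_concentration
    {Ω : Type*} [MeasurableSpace Ω] (μ : Measure Ω) [IsProbabilityMeasure μ]
    {k : ℕ} (W W' : Ω → Fin k → ℝ)
    (hWmeas : Measurable W) (hW'meas : Measurable W')
    (hexch : IdentDistrib (fun ω => (W ω, W' ω)) (fun ω => (W' ω, W ω)) μ μ)
    (Λ : Matrix (Fin k) (Fin k) ℝ) (hΛ : IsUnit Λ.det)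
    (hcond : ∀ i, μ[fun ω => W' ω i | MeasurableSpace.comap W inferInstance]
      =ᵐ[μ] fun ω => ∑ j, (1 - Λ) i j * W ω j)
    (K : ℝ) (hK : ∀ᵐ ω ∂μ, norm2 (fun i => W ω i - W' ω i) ≤ K)
    (hmgf : ∀ θ : Fin k → ℝ, Integrable (fun ω => Real.exp (θ ⬝ᵥ W ω)) μ)
    (w : Fin k → ℝ) (hw : ∀ i, 0 ≤ w i) :
    μ {ω | ∀ i, w i ≤ W ω i}
        ≤ ENNReal.ofReal
            (Real.exp (-(norm2 w ^ 2 / (2 * K ^ 2 * (1 / smallestSingularValue Λ))))) ∧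
      μ {ω | ∀ i, W ω i ≤ -w i}
        ≤ ENNReal.ofReal
            (Real.exp (-(norm2 w ^ 2 / (2 * K ^ 2 * (1 / smallestSingularValue Λ))))) := by
  rcases (smallestSingularValue_nonneg Λ).eq_or_lt with hσ | hσ
  -- `σ₁(Λ) = 0` turns the exponent into a division by zero, so the bound is `exp 0 = 1`.
  · simp only [← hσ, div_zero, mul_zero, neg_zero, exp_zero, ENNReal.ofReal_one]
    exact ⟨prob_le_one, prob_le_one⟩
  have htail := measure_sq_norm2_le_dotProduct_le hWmeas hW'meas hexch Λ hΛ hcond hK hmgf hσ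
  constructor
  · refine (measure_mono fun ω hω => ?_).trans (htail w)
    rw [Set.mem_ofPred_eq, norm2_sq]
    exact dotProduct_le_dotProduct_of_nonneg_left hω hw
  · refine (measure_mono fun ω hω => ?_).trans (norm2_neg w ▸ htail (-w))
    rw [Set.mem_ofPred_eq, norm2_sq, neg_dotProduct, ← dotProduct_neg]
    exact dotProduct_le_dotProduct_of_nonneg_left (fun i => le_neg_of_le_neg (hω i)) hw
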